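/- arXiv:2112.06181 — 2 statements merged into one kernel-verified Lean document; each statement's English description precedes it below -/
import Mathlib

section
/- (Boundedness of the Q-learning iterates.) Let S and A be nonempty finite sets, γ ∈ [0,1), R ≥ 0, and r : S × A → ℝ with |r(s,a)| ≤ R for all (s,a). Let p be a transition kernel with p(·|s,a) ∈ Δ(S) for all (s,a). Let (Q̂_k)_{k≥0} with Q̂_k : S × A → ℝ and (v̂_k)_{k≥0} with v̂_k : S → ℝ satisfy |v̂_k(s)| ≤ max_{(s',a')} |Q̂_k(s',a')| for all k and s, and suppose Q̂_{k+1}(s,a) = Q̂_k(s,a) + β̄_k(s,a) (r(s,a) + γ Σ_{s'} p(s'|s,a) v̂_k(s') − Q̂_k(s,a)) for step sizes β̄_k(s,a) ∈ [0,1]. Then for all k, max_{(s,a)} |Q̂_k(s,a)| ≤ max{ max_{(s,a)} |Q̂_0(s,a)|, R/(1−γ) }. -/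
open Filter Topology Finset

noncomputable section

def simplex (S : Type) [Fintype S] : Set (S → ℝ) :=
  {μ | (∀ s, 0 ≤ μ s) ∧ ∑ s, μ s = 1}

/-! Each coordinate of `Q (k+1)` is a convex combination of the old value `Q k s a` and the
Bellman target `r s a + γ * 𝔼[v k]`. The target is bounded by `R + γ M_k`, where `M_k` is the
sup-norm of `Q k`, and `R + γ M ≤ max M (R / (1 - γ))` because `R / (1 - γ)` is the fixed point
of `M ↦ R + γ M`. Hence `M_{k+1} ≤ max M_k (R / (1 - γ))`, and induction on `k` finishes. -/

theorem abs_sum_mul_le_of_mem_simplex {S : Type} [Fintype S] {μ : S → ℝ} (hμ : μ ∈ simplex S)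
    {f : S → ℝ} {M : ℝ} (hf : ∀ s, |f s| ≤ M) : |∑ s, μ s * f s| ≤ M :=
  calc |∑ s, μ s * f s| ≤ ∑ s, |μ s * f s| := abs_sum_le_sum_abs _ _
    _ ≤ ∑ s, μ s * M := sum_le_sum fun s _ => by
        rw [abs_mul, abs_of_nonneg (hμ.1 s)]
        exact mul_le_mul_of_nonneg_left (hf s) (hμ.1 s)
    _ = M := by rw [← sum_mul, hμ.2, one_mul]

theorem abs_add_mul_le_max_div_one_sub {γ R M r w : ℝ} (hγ0 : 0 ≤ γ) (hγ1 : γ < 1)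
    (hr : |r| ≤ R) (hw : |w| ≤ M) : |r + γ * w| ≤ max M (R / (1 - γ)) := by
  have hR : R ≤ (1 - γ) * max M (R / (1 - γ)) :=
    calc R = (1 - γ) * (R / (1 - γ)) := by field_simp [(sub_pos.2 hγ1).ne']
      _ ≤ (1 - γ) * max M (R / (1 - γ)) :=
          mul_le_mul_of_nonneg_left (le_max_right _ _) (sub_pos.2 hγ1).le
  calc |r + γ * w| ≤ |r| + γ * |w| := by
        simpa only [abs_mul, abs_of_nonneg hγ0] using abs_add_le r (γ * w)
    _ ≤ R + γ * max M (R / (1 - γ)) := by gcongr; exact le_max_of_le_left hw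
    _ ≤ max M (R / (1 - γ)) := by linarith

theorem abs_add_mul_sub_le {x y β M : ℝ} (hβ : β ∈ Set.Icc (0 : ℝ) 1) (hx : |x| ≤ M)
    (hy : |y| ≤ M) : |x + β * (y - x)| ≤ M := by
  obtain ⟨hβ0, hβ1⟩ := hβ
  obtain ⟨hx₁, hx₂⟩ := abs_le.1 hx
  obtain ⟨hy₁, hy₂⟩ := abs_le.1 hy
  exact abs_le.2 ⟨by nlinarith, by nlinarith⟩

theorem le_max_of_succ_le_max {α : Type*} [LinearOrder α] {a : ℕ → α} {b : α}
    (h : ∀ k, a (k + 1) ≤ max (a k) b) : ∀ k, a k ≤ max (a 0) b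
  | 0 => le_max_left _ _
  | k + 1 => (h k).trans (max_le (le_max_of_succ_le_max h k) (le_max_right _ _))

theorem q_learning_iterates_bounded_general
    {S A : Type} [Fintype S] [Fintype A] [Nonempty S] [Nonempty A]
    (γ : ℝ) (hγ0 : 0 ≤ γ) (hγ1 : γ < 1)
    (R : ℝ)
    (r : S → A → ℝ) (hr : ∀ s a, |r s a| ≤ R)
    (p : S → A → S → ℝ) (hp : ∀ s a, p s a ∈ simplex S)
    (Q : ℕ → S → A → ℝ) (v : ℕ → S → ℝ)
    (hv : ∀ k s, |v k s| ≤
      Finset.univ.sup' Finset.univ_nonempty (fun x : S × A => |Q k x.1 x.2|))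
    (β : ℕ → S → A → ℝ) (hβ : ∀ k s a, β k s a ∈ Set.Icc (0:ℝ) 1)
    (hup : ∀ k s a, Q (k+1) s a = Q k s a
        + β k s a * (r s a + γ * (∑ s', p s a s' * v k s') - Q k s a)) :
    ∀ k, Finset.univ.sup' Finset.univ_nonempty (fun x : S × A => |Q k x.1 x.2|)
      ≤ max (Finset.univ.sup' Finset.univ_nonempty (fun x : S × A => |Q 0 x.1 x.2|))
          (R / (1 - γ)) := by
  refine le_max_of_succ_le_max fun k => sup'_le _ _ fun ⟨s, a⟩ _ => ?_
  have hQ : |Q k s a| ≤ univ.sup' univ_nonempty (fun x : S × A => |Q k x.1 x.2|) :=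
    le_sup' (fun x : S × A => |Q k x.1 x.2|) (mem_univ (s, a))
  rw [hup]
  exact abs_add_mul_sub_le (hβ k s a) (le_max_of_le_left hQ)
    (abs_add_mul_le_max_div_one_sub hγ0 hγ1 (hr s a)
      (abs_sum_mul_le_of_mem_simplex (hp s a) (hv k)))

/-- boundedness of the Q-learning iterates. -/
theorem q_learning_iterates_bounded
    {S A : Type} [Fintype S] [Fintype A] [Nonempty S] [Nonempty A]
    (γ : ℝ) (hγ0 : 0 ≤ γ) (hγ1 : γ < 1)
    (R : ℝ) (hR : 0 ≤ R)
    (r : S → A → ℝ) (hr : ∀ s a, |r s a| ≤ R)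
    (p : S → A → S → ℝ) (hp : ∀ s a, p s a ∈ simplex S)
    (Q : ℕ → S → A → ℝ) (v : ℕ → S → ℝ)
    (hv : ∀ k s, |v k s| ≤
      Finset.univ.sup' Finset.univ_nonempty (fun x : S × A => |Q k x.1 x.2|))
    (β : ℕ → S → A → ℝ) (hβ : ∀ k s a, β k s a ∈ Set.Icc (0:ℝ) 1)
    (hup : ∀ k s a, Q (k+1) s a = Q k s a
        + β k s a * (r s a + γ * (∑ s', p s a s' * v k s') - Q k s a)) :
    ∀ k, Finset.univ.sup' Finset.univ_nonempty (fun x : S × A => |Q k x.1 x.2|)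
      ≤ max (Finset.univ.sup' Finset.univ_nonempty (fun x : S × A => |Q 0 x.1 x.2|))
          (R / (1 - γ)) :=
  q_learning_iterates_bounded_general γ hγ0 hγ1 R r hr p hp Q v hv β hβ hup
end
end

section
/- (Final contraction step of the convergence proof.) Let S and A be nonempty finite sets and p a transition kernel with p(·|s,a) ∈ Δ(S) for all (s,a). Let d_α, d_β ∈ (0,1], γ ∈ (0,1) with γ < d_α d_β, and λ ∈ (1, d_α d_β / γ). Let (Γ_k)_{k≥0}, (Q̄_k)_{k≥0} be uniformly bounded sequences of functions S × A → ℝ and (v̄_k)_{k≥0} a uniformly bounded sequence of functions S → ℝ, and let β̄_k(s) ∈ [0,1] satisfy β̄_k(s) → 0 and Σ_{k=0}^∞ β̄_k(s) = ∞ for each s ∈ S. Assume: (i) Γ_{k+1}(s,a) = Γ_k(s,a) + β̄_k(s) d_β (γ Σ_{s'} p(s'|s,a) v̄_k(s') − Q̄_k(s,a) + ζ_k(s,a)) for all k and (s,a), where ζ_k(s,a) → 0; (ii) ε̲_k(s) ≤ v̄_k(s) ≤ (λ/d_α) max_{a} |Q̄_k(s,a)| + ε̄_k(s) for all k and s, where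 ε̲_k(s) → 0 and ε̄_k(s) → 0; (iii) liminf_{k→∞} Γ_k(s,a) ≥ 0 for all (s,a); and (iv) η̄_k(s,a) + (1/d_β) Γ_k(s,a) ≥ |Q̄_k(s,a)| ≥ Q̄_k(s,a) ≥ Γ_k(s,a) + η̲_k(s,a) for all k and (s,a), where η̄_k(s,a) → 0 and η̲_k(s,a) → 0. Then Γ_k(s,a) → 0 and Q̄_k(s,a) → 0 for every (s,a) ∈ S × A, and v̄_k(s) → 0 for every s ∈ S. -/
/-! If from some time on `Γ_k ≤ M` on all of `S × A`, then (ii) and (iv) bound the drift in (i)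
by `c M - Γ_k(s,a) + o(1)` with `c = γ λ / (d_α d_β) < 1`. Since `∑ β̄_k(s) = ∞`, every `Γ(s,a)`
then relaxes below `c M + ε`. Iterating `M ↦ c M + ε` pushes the eventual upper bound of `Γ`
below any `δ > 0`, which together with `liminf Γ ≥ 0` gives `Γ → 0`; the sandwiches (iv) and (ii)
then give `Q̄ → 0` and `v̄ → 0`. -/

open Filter Topology Finset

noncomputable section

theorem sum_mul_le_of_mem_simplex {S : Type} [Fintype S] {μ : S → ℝ} (hμ : μ ∈ simplex S)
    {f : S → ℝ} {U : ℝ} (hf : ∀ s, f s ≤ U) : ∑ s, μ s * f s ≤ U :=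
  calc ∑ s, μ s * f s ≤ ∑ s, μ s * U :=
        sum_le_sum fun s _ => mul_le_mul_of_nonneg_left (hf s) (hμ.1 s)
    _ = U := by rw [← sum_mul, hμ.2, one_mul]

/-- Since `1 - b ≤ exp (-b)`, the weight `ψ k * exp (∑_{j<k} b j)` is eventually nonincreasing,
so `ψ k` is eventually dominated by a multiple of `exp (-∑_{j<k} b j)`. -/
theorem tendsto_zero_of_le_one_sub_mul {ψ b : ℕ → ℝ} (hψ : ∀ k, 0 ≤ ψ k)
    (hstep : ∀ᶠ k in atTop, ψ (k + 1) ≤ (1 - b k) * ψ k)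
    (hsum : Tendsto (fun n => ∑ k ∈ range n, b k) atTop atTop) :
    Tendsto ψ atTop (𝓝 0) := by
  obtain ⟨k₀, hk₀⟩ := eventually_atTop.1 hstep
  set C := ψ k₀ * Real.exp (∑ j ∈ range k₀, b j)
  have hbound : ∀ k, k₀ ≤ k → ψ k * Real.exp (∑ j ∈ range k, b j) ≤ C := by
    refine Nat.le_induction le_rfl fun k hk ih => ?_
    calc ψ (k + 1) * Real.exp (∑ j ∈ range (k + 1), b j)
        ≤ Real.exp (-b k) * ψ k * Real.exp (∑ j ∈ range (k + 1), b j) := by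
          gcongr
          exact (hk₀ k hk).trans
            (mul_le_mul_of_nonneg_right (Real.one_sub_le_exp_neg _) (hψ k))
      _ = ψ k * Real.exp (∑ j ∈ range k, b j) := by
          rw [sum_range_succ, Real.exp_add, Real.exp_neg]
          field_simp
      _ ≤ C := ih
  have hC : Tendsto (fun k => C * Real.exp (-∑ j ∈ range k, b j)) atTop (𝓝 0) := by
    simpa using (Real.tendsto_exp_neg_atTop_nhds_zero.comp hsum).const_mul C
  refine tendsto_of_tendsto_of_tendsto_of_le_of_le' tendsto_const_nhds hC
    (Eventually.of_forall hψ) ((eventually_ge_atTop k₀).mono fun k hk => ?_)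
  rw [Real.exp_neg, ← div_eq_mul_inv, le_div_iff₀ (Real.exp_pos _)]
  exact hbound k hk

/-- The positive part of `x k - T` contracts by the factor `1 - b k`. -/
theorem eventually_le_add_of_relaxation {x b : ℕ → ℝ} {T : ℝ} (hb : ∀ k, b k ≤ 1)
    (hsum : Tendsto (fun n => ∑ k ∈ range n, b k) atTop atTop)
    (hstep : ∀ᶠ k in atTop, x (k + 1) ≤ x k + b k * (T - x k)) :
    ∀ δ > 0, ∀ᶠ k in atTop, x k ≤ T + δ := by
  have hψ : Tendsto (fun k => max (x k - T) 0) atTop (𝓝 0) := by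
    refine tendsto_zero_of_le_one_sub_mul (fun k => le_max_right _ _)
      (hstep.mono fun k hk => max_le ?_ ?_) hsum
    · calc x (k + 1) - T ≤ (1 - b k) * (x k - T) := by linarith
        _ ≤ (1 - b k) * max (x k - T) 0 :=
          mul_le_mul_of_nonneg_left (le_max_left _ _) (sub_nonneg.2 (hb k))
    · exact mul_nonneg (sub_nonneg.2 (hb k)) (le_max_right _ _)
  intro δ hδ
  filter_upwards [hψ.eventually (gt_mem_nhds hδ)] with k hk
  linarith [le_max_left (x k - T) 0]

theorem tendsto_zero_of_liminf_nonneg {α : Type*} {l : Filter α} {u : α → ℝ}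
    (hbdd : IsBoundedUnder (· ≥ ·) l u) (hliminf : 0 ≤ liminf u l)
    (hle : ∀ δ > 0, ∀ᶠ k in l, u k ≤ δ) : Tendsto u l (𝓝 0) :=
  tendsto_order.2 ⟨fun _ ha => eventually_lt_of_lt_liminf (ha.trans_le hliminf) hbdd,
    fun _ ha => (hle _ (half_pos ha)).mono fun _ hk => hk.trans_lt (half_lt_self ha)⟩

/-- The bounds `M (n + 1) = c * M n + ε` started at `B` approach the fixed point `ε / (1 - c)`,
which can be made as small as we like. -/
theorem forall_pos_of_contraction {P : ℝ → Prop} (hP : Monotone P) {c B : ℝ} (hc : |c| < 1)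
    (hB : P B) (hstep : ∀ M, P M → ∀ ε > 0, P (c * M + ε)) : ∀ δ > 0, P δ := by
  intro δ hδ
  have hc1 : c < 1 := (le_abs_self c).trans_lt hc
  set M : ℕ → ℝ := fun n => c ^ n * (B - δ / 2) + δ / 2
  have hM : ∀ n, P (M n) := by
    intro n
    induction n with
    | zero => simpa [M] using hB
    | succ n ih =>
      convert hstep _ ih ((1 - c) * δ / 2) (by nlinarith) using 1
      simp only [M, pow_succ]
      ring
  have hlim : Tendsto M atTop (𝓝 (0 * (B - δ / 2) + δ / 2)) :=
    ((tendsto_pow_atTop_nhds_zero_of_abs_lt_one hc).mul_const _).add_const _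
  rw [zero_mul, zero_add] at hlim
  obtain ⟨n, hn⟩ := (hlim.eventually (gt_mem_nhds (half_lt_self hδ))).exists
  exact hP hn.le (hM n)

theorem eventually_forall_le_of_drift {ι : Type*} [Finite ι] {x b D : ℕ → ι → ℝ}
    {E : ℕ → ℝ} {M T : ℝ} (hb : ∀ k i, b k i ∈ Set.Icc (0 : ℝ) 1)
    (hsum : ∀ i, Tendsto (fun n => ∑ k ∈ range n, b k i) atTop atTop)
    (hrec : ∀ k i, x (k + 1) i = x k i + b k i * D k i) (hE : Tendsto E atTop (𝓝 0))
    (hD : ∀ k, (∀ i, x k i ≤ M) → ∀ i, D k i ≤ T + E k - x k i)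
    (hM : ∀ᶠ k in atTop, ∀ i, x k i ≤ M) :
    ∀ ε > 0, ∀ᶠ k in atTop, ∀ i, x k i ≤ T + ε := by
  intro ε hε
  refine eventually_all.2 fun i => ?_
  have hstep : ∀ᶠ k in atTop, x (k + 1) i ≤ x k i + b k i * (T + ε / 2 - x k i) := by
    filter_upwards [hM, hE.eventually (gt_mem_nhds (half_pos hε))] with k hk hEk
    rw [hrec]
    gcongr
    · exact (hb k i).1
    · linarith [hD k hk i]
  filter_upwards [eventually_le_add_of_relaxation (x := (x · i)) (fun k => (hb k i).2)
    (hsum i) hstep _ (half_pos hε)] with k hk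
  linarith

theorem eventually_forall_le_of_contracting_drift {ι : Type*} [Finite ι] {x b D : ℕ → ι → ℝ}
    {E : ℕ → ℝ} {c B : ℝ} (hc : |c| < 1) (hB : ∀ k i, x k i ≤ B)
    (hb : ∀ k i, b k i ∈ Set.Icc (0 : ℝ) 1)
    (hsum : ∀ i, Tendsto (fun n => ∑ k ∈ range n, b k i) atTop atTop)
    (hrec : ∀ k i, x (k + 1) i = x k i + b k i * D k i) (hE : Tendsto E atTop (𝓝 0))
    (hD : ∀ M k, (∀ i, x k i ≤ M) → ∀ i, D k i ≤ c * M + E k - x k i) :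
    ∀ δ > 0, ∀ᶠ k in atTop, ∀ i, x k i ≤ δ :=
  forall_pos_of_contraction (fun _ _ hMM' hM => hM.mono fun _ hk i => (hk i).trans hMM') hc
    (Eventually.of_forall hB) fun M =>
      eventually_forall_le_of_drift hb hsum hrec hE (hD M)

theorem tendsto_norm_zero_of_forall_apply {α ι E : Type*} [Fintype ι]
    [SeminormedAddCommGroup E] {l : Filter α} {f : α → ι → E} (h : ∀ i, Tendsto (f · i) l (𝓝 0)) :
    Tendsto (‖f ·‖) l (𝓝 0) := by
  simpa using (tendsto_pi_nhds (g := 0).2 h).norm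

theorem abs_apply_apply_le_norm {S A : Type} [Fintype S] [Fintype A] (f : S → A → ℝ) (s : S)
    (a : A) : |f s a| ≤ ‖f‖ :=
  (Real.norm_eq_abs _ ▸ norm_le_pi_norm (f s) a).trans (norm_le_pi_norm f s)

theorem drift_le_of_forall_le {S A : Type} [Fintype S] [Fintype A] [Nonempty A]
    {p : S → A → S → ℝ} (hp : ∀ s a, p s a ∈ simplex S) {dα dβ γ lam M : ℝ}
    (hdα : 0 < dα) (hdβ : 0 < dβ) (hγ : 0 ≤ γ) (hlam : 0 ≤ lam)
    {G Q ζ ηlo ηhi : S → A → ℝ} {v εhi : S → ℝ} (hGM : ∀ s a, G s a ≤ M)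
    (hv : ∀ s, v s ≤ (lam / dα) * univ.sup' univ_nonempty (fun a => |Q s a|) + εhi s)
    (hQhi : ∀ s a, |Q s a| ≤ ηhi s a + (1 / dβ) * G s a)
    (hQlo : ∀ s a, G s a + ηlo s a ≤ Q s a) (s : S) (a : A) :
    γ * (∑ s', p s a s' * v s') - Q s a + ζ s a ≤
      γ * lam / (dα * dβ) * M + (γ * (lam / dα) * ‖ηhi‖ + γ * ‖εhi‖ + ‖ηlo‖ + ‖ζ‖)
        - G s a := by
  have hQ : ∀ s', univ.sup' univ_nonempty (fun a => |Q s' a|) ≤ (1 / dβ) * M + ‖ηhi‖ := by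
    refine fun s' => sup'_le _ _ fun a' _ => (hQhi s' a').trans ?_
    have := mul_le_mul_of_nonneg_left (hGM s' a') (one_div_nonneg.2 hdβ.le)
    linarith [(le_abs_self _).trans (abs_apply_apply_le_norm ηhi s' a')]
  have hv' : ∀ s', v s' ≤ (lam / dα) * ((1 / dβ) * M + ‖ηhi‖) + ‖εhi‖ := fun s' => by
    have := mul_le_mul_of_nonneg_left (hQ s') (div_nonneg hlam hdα.le)
    have hε := (le_abs_self _).trans (Real.norm_eq_abs (εhi s') ▸ norm_le_pi_norm εhi s')
    linarith [hv s']
  have hPv := mul_le_mul_of_nonneg_left (sum_mul_le_of_mem_simplex (hp s a) hv') hγ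
  have hηlo := (neg_le_abs _).trans (abs_apply_apply_le_norm ηlo s a)
  have hζ := (le_abs_self _).trans (abs_apply_apply_le_norm ζ s a)
  have hcM : γ * ((lam / dα) * ((1 / dβ) * M)) = γ * lam / (dα * dβ) * M := by
    field_simp
  linarith [hQlo s a]

theorem final_contraction_step_general
    {S A : Type} [Fintype S] [Fintype A] [Nonempty A]
    (p : S → A → S → ℝ) (hp : ∀ s a, p s a ∈ simplex S)
    (dα dβ γ lam : ℝ)
    (hdα : dα ∈ Set.Ioc (0:ℝ) 1) (hdβ : dβ ∈ Set.Ioc (0:ℝ) 1)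
    (hγ : γ ∈ Set.Ioo (0:ℝ) 1)
    (hlam : lam ∈ Set.Ioo (1:ℝ) (dα * dβ / γ))
    (Γ Qb : ℕ → S → A → ℝ) (vb : ℕ → S → ℝ)
    (hΓbdd : ∃ B : ℝ, ∀ k s a, |Γ k s a| ≤ B)
    (β : ℕ → S → ℝ) (hβmem : ∀ k s, β k s ∈ Set.Icc (0:ℝ) 1)
    (hβsum : ∀ s, Tendsto (fun K => ∑ k ∈ Finset.range K, β k s) atTop atTop)
    -- (i) recursion for Γ
    (ζ : ℕ → S → A → ℝ) (hζ : ∀ s a, Tendsto (fun k => ζ k s a) atTop (𝓝 0))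
    (hΓrec : ∀ k s a, Γ (k+1) s a = Γ k s a
        + β k s * dβ * (γ * (∑ s', p s a s' * vb k s') - Qb k s a + ζ k s a))
    -- (ii) two-sided bound on v̄
    (εlo εhi : ℕ → S → ℝ)
    (hεlo : ∀ s, Tendsto (fun k => εlo k s) atTop (𝓝 0))
    (hεhi : ∀ s, Tendsto (fun k => εhi k s) atTop (𝓝 0))
    (hvlo : ∀ k s, εlo k s ≤ vb k s)
    (hvhi : ∀ k s, vb k s ≤ (lam / dα) *
        Finset.univ.sup' Finset.univ_nonempty (fun a => |Qb k s a|) + εhi k s)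
    -- (iii) liminf bound on Γ
    (hΓliminf : ∀ s a, 0 ≤ atTop.liminf (fun k => Γ k s a))
    -- (iv) bounds relating Q̄ and Γ
    (ηlo ηhi : ℕ → S → A → ℝ)
    (hηlo : ∀ s a, Tendsto (fun k => ηlo k s a) atTop (𝓝 0))
    (hηhi : ∀ s a, Tendsto (fun k => ηhi k s a) atTop (𝓝 0))
    (hQΓ : ∀ k s a, |Qb k s a| ≤ ηhi k s a + (1 / dβ) * Γ k s a ∧
        Qb k s a ≤ |Qb k s a| ∧ Γ k s a + ηlo k s a ≤ Qb k s a) :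
    (∀ s a, Tendsto (fun k => Γ k s a) atTop (𝓝 0)) ∧
    (∀ s a, Tendsto (fun k => Qb k s a) atTop (𝓝 0)) ∧
    (∀ s, Tendsto (fun k => vb k s) atTop (𝓝 0)) := by
  obtain ⟨B, hB⟩ := hΓbdd
  have hdαβ : 0 < dα * dβ := mul_pos hdα.1 hdβ.1
  have hc : |γ * lam / (dα * dβ)| < 1 := by
    rw [abs_of_pos (div_pos (mul_pos hγ.1 (by linarith [hlam.1])) hdαβ), div_lt_one hdαβ,
      ← lt_div_iff₀' hγ.1]
    exact hlam.2
  have hnorm {f : ℕ → S → A → ℝ} (h : ∀ s a, Tendsto (f · s a) atTop (𝓝 0)) :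
      Tendsto (‖f ·‖) atTop (𝓝 0) :=
    tendsto_norm_zero_of_forall_apply fun s => tendsto_pi_nhds.2 (h s)
  have hE := ((((hnorm hηhi).const_mul (γ * (lam / dα))).add
    ((tendsto_norm_zero_of_forall_apply hεhi).const_mul γ)).add (hnorm hηlo)).add (hnorm hζ)
  simp only [mul_zero, add_zero] at hE
  have hΓle : ∀ δ > 0, ∀ᶠ k in atTop, ∀ sa : S × A, Γ k sa.1 sa.2 ≤ δ :=
    eventually_forall_le_of_contracting_drift (b := fun k sa => β k sa.1 * dβ) hc
      (fun k sa => (le_abs_self _).trans (hB k sa.1 sa.2))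
      (fun k sa => ⟨mul_nonneg (hβmem k sa.1).1 hdβ.1.le,
        mul_le_one₀ (hβmem k sa.1).2 hdβ.1.le hdβ.2⟩)
      (fun sa => ((hβsum sa.1).atTop_mul_const hdβ.1).congr fun n => sum_mul _ _ _)
      (fun k sa => hΓrec k sa.1 sa.2) hE
      fun M k hk sa => drift_le_of_forall_le hp hdα.1 hdβ.1 hγ.1.le (by linarith [hlam.1])
        (fun s a => hk (s, a)) (hvhi k) (fun s a => (hQΓ k s a).1) (fun s a => (hQΓ k s a).2.2)
        sa.1 sa.2
  have hΓ : ∀ s a, Tendsto (fun k => Γ k s a) atTop (𝓝 0) := fun s a =>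
    tendsto_zero_of_liminf_nonneg (isBoundedUnder_of ⟨-B, fun k => neg_le_of_abs_le (hB k s a)⟩)
      (hΓliminf s a) fun δ hδ => (hΓle δ hδ).mono fun k hk => hk (s, a)
  have hQ : ∀ s a, Tendsto (fun k => Qb k s a) atTop (𝓝 0) := fun s a => by
    refine tendsto_of_tendsto_of_tendsto_of_le_of_le ?_ ?_ (fun k => (hQΓ k s a).2.2)
      fun k => (hQΓ k s a).2.1.trans (hQΓ k s a).1
    · simpa using (hΓ s a).add (hηlo s a)
    · simpa using (hηhi s a).add ((hΓ s a).const_mul (1 / dβ))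
  refine ⟨hΓ, hQ, fun s => tendsto_of_tendsto_of_tendsto_of_le_of_le (hεlo s) ?_ (hvlo · s)
    (hvhi · s)⟩
  simpa using ((Tendsto.finset_sup'_nhds univ_nonempty fun a _ => (hQ s a).abs).const_mul
    (lam / dα)).add (hεhi s)

/-- final contraction step of the convergence proof. -/
theorem final_contraction_step
    {S A : Type} [Fintype S] [Fintype A] [Nonempty S] [Nonempty A]
    (p : S → A → S → ℝ) (hp : ∀ s a, p s a ∈ simplex S)
    (dα dβ γ lam : ℝ)
    (hdα : dα ∈ Set.Ioc (0:ℝ) 1) (hdβ : dβ ∈ Set.Ioc (0:ℝ) 1)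
    (hγ : γ ∈ Set.Ioo (0:ℝ) 1) (hγd : γ < dα * dβ)
    (hlam : lam ∈ Set.Ioo (1:ℝ) (dα * dβ / γ))
    (Γ Qb : ℕ → S → A → ℝ) (vb : ℕ → S → ℝ)
    (hΓbdd : ∃ B : ℝ, ∀ k s a, |Γ k s a| ≤ B)
    (hQbdd : ∃ B : ℝ, ∀ k s a, |Qb k s a| ≤ B)
    (hvbdd : ∃ B : ℝ, ∀ k s, |vb k s| ≤ B)
    (β : ℕ → S → ℝ) (hβmem : ∀ k s, β k s ∈ Set.Icc (0:ℝ) 1)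
    (hβlim : ∀ s, Tendsto (fun k => β k s) atTop (𝓝 0))
    (hβsum : ∀ s, Tendsto (fun K => ∑ k ∈ Finset.range K, β k s) atTop atTop)
    -- (i) recursion for Γ
    (ζ : ℕ → S → A → ℝ) (hζ : ∀ s a, Tendsto (fun k => ζ k s a) atTop (𝓝 0))
    (hΓrec : ∀ k s a, Γ (k+1) s a = Γ k s a
        + β k s * dβ * (γ * (∑ s', p s a s' * vb k s') - Qb k s a + ζ k s a))
    -- (ii) two-sided bound on v̄
    (εlo εhi : ℕ → S → ℝ)
    (hεlo : ∀ s, Tendsto (fun k => εlo k s) atTop (𝓝 0))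
    (hεhi : ∀ s, Tendsto (fun k => εhi k s) atTop (𝓝 0))
    (hvlo : ∀ k s, εlo k s ≤ vb k s)
    (hvhi : ∀ k s, vb k s ≤ (lam / dα) *
        Finset.univ.sup' Finset.univ_nonempty (fun a => |Qb k s a|) + εhi k s)
    -- (iii) liminf bound on Γ
    (hΓliminf : ∀ s a, 0 ≤ atTop.liminf (fun k => Γ k s a))
    -- (iv) bounds relating Q̄ and Γ
    (ηlo ηhi : ℕ → S → A → ℝ)
    (hηlo : ∀ s a, Tendsto (fun k => ηlo k s a) atTop (𝓝 0))
    (hηhi : ∀ s a, Tendsto (fun k => ηhi k s a) atTop (𝓝 0))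
    (hQΓ : ∀ k s a, |Qb k s a| ≤ ηhi k s a + (1 / dβ) * Γ k s a ∧
        Qb k s a ≤ |Qb k s a| ∧ Γ k s a + ηlo k s a ≤ Qb k s a) :
    (∀ s a, Tendsto (fun k => Γ k s a) atTop (𝓝 0)) ∧
    (∀ s a, Tendsto (fun k => Qb k s a) atTop (𝓝 0)) ∧
    (∀ s, Tendsto (fun k => vb k s) atTop (𝓝 0)) :=
  final_contraction_step_general p hp dα dβ γ lam hdα hdβ hγ hlam Γ Qb vb hΓbdd β hβmem hβsum ζ hζ
    hΓrec εlo εhi hεlo hεhi hvlo hvhi hΓliminf ηlo ηhi hηlo hηhi hQΓ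
end
end
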